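/- The double integral 2·∫_0^{π/2} ∫_ψ^{π-ψ} sin²(φ+ψ)·csc²(φ) dφ dψ equals 4. -/

import Mathlib

open Real intervalIntegral

/-!
Expanding `sin (φ + ψ)`, the integrand is `cos ψ ^ 2 + sin (2ψ) cot φ + sin ψ ^ 2 cot φ ^ 2`,
with the elementary primitive `φ cos (2ψ) + sin (2ψ) log (sin φ) - sin ψ ^ 2 cot φ`. On
`[ψ, π - ψ]`, which is symmetric about `π / 2`, the logarithm cancels and the inner integral is
`(π - 2ψ) cos (2ψ) + sin (2ψ)`, whose integral over `[0, π / 2]` is `2`.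
-/

noncomputable def sinAddSqDivSinSqPrimitive (ψ φ : ℝ) : ℝ :=
  φ * cos (2 * ψ) + sin (2 * ψ) * log (sin φ) - sin ψ ^ 2 * (cos φ / sin φ)

theorem hasDerivAt_sinAddSqDivSinSqPrimitive (ψ : ℝ) {φ : ℝ} (hφ : sin φ ≠ 0) :
    HasDerivAt (sinAddSqDivSinSqPrimitive ψ) (sin (φ + ψ) ^ 2 * (1 / sin φ) ^ 2) φ := by
  have hlog : HasDerivAt (fun x => log (sin x)) (cos φ / sin φ) φ := (hasDerivAt_sin φ).log hφ
  have hcot : HasDerivAt (fun x => cos x / sin x)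
      ((-sin φ * sin φ - cos φ * cos φ) / sin φ ^ 2) φ :=
    (hasDerivAt_cos φ).div (hasDerivAt_sin φ) hφ
  refine ((((hasDerivAt_id φ).mul_const (cos (2 * ψ))).add
    (hlog.const_mul (sin (2 * ψ)))).sub (hcot.const_mul (sin ψ ^ 2))).congr_deriv ?_
  rw [sin_add, sin_two_mul, cos_two_mul]
  field_simp
  linear_combination sin φ ^ 2 * sin_sq_add_cos_sq ψ

theorem integral_sin_add_sq_div_sin_sq (ψ : ℝ) {a b : ℝ}
    (h : ∀ φ ∈ Set.uIcc a b, sin φ ≠ 0) :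
    ∫ φ in a..b, sin (φ + ψ) ^ 2 * (1 / sin φ) ^ 2 =
      sinAddSqDivSinSqPrimitive ψ b - sinAddSqDivSinSqPrimitive ψ a := by
  refine integral_eq_sub_of_hasDerivAt
    (fun φ hφ => hasDerivAt_sinAddSqDivSinSqPrimitive ψ (h φ hφ)) ?_
  refine ContinuousOn.intervalIntegrable ?_
  exact (by fun_prop : Continuous fun φ => sin (φ + ψ) ^ 2).continuousOn.mul
    ((continuousOn_const.div continuous_sin.continuousOn h).pow 2)

theorem integral_sin_add_sq_div_sin_sq_symm {ψ : ℝ} (h0 : 0 < ψ) (hπ : ψ < π) :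
    ∫ φ in ψ..(π - ψ), sin (φ + ψ) ^ 2 * (1 / sin φ) ^ 2 =
      (π - 2 * ψ) * cos (2 * ψ) + sin (2 * ψ) := by
  have hsin : ∀ φ ∈ Set.uIcc ψ (π - ψ), sin φ ≠ 0 := by
    intro φ hφ
    refine (sin_pos_of_pos_of_lt_pi ?_ ?_).ne' <;>
      rcases Set.mem_uIcc.mp hφ with h | h <;> linarith
  have hsψ : sin ψ ≠ 0 := (sin_pos_of_pos_of_lt_pi h0 hπ).ne'
  rw [integral_sin_add_sq_div_sin_sq ψ hsin]
  simp only [sinAddSqDivSinSqPrimitive, sin_pi_sub, cos_pi_sub, sin_two_mul]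
  field_simp
  ring

theorem integral_pi_sub_two_mul_mul_cos_add_sin :
    ∫ ψ in (0 : ℝ)..(π / 2), ((π - 2 * ψ) * cos (2 * ψ) + sin (2 * ψ)) = 2 := by
  have hderiv (ψ : ℝ) : HasDerivAt (fun ψ => (π - 2 * ψ) * sin (2 * ψ) / 2 - cos (2 * ψ))
      ((π - 2 * ψ) * cos (2 * ψ) + sin (2 * ψ)) ψ := by
    have h2 : HasDerivAt (fun ψ : ℝ => 2 * ψ) 2 ψ := by
      simpa using (hasDerivAt_id ψ).const_mul 2
    refine (((h2.const_sub π).mul h2.sin).div_const 2).sub h2.cos |>.congr_deriv ?_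
    ring
  rw [integral_eq_sub_of_hasDerivAt (fun ψ _ => hderiv ψ) (Continuous.intervalIntegrable
    (by fun_prop) _ _), mul_div_cancel₀ π two_ne_zero]
  norm_num

theorem double_integral_eq_four :
    2 * (∫ ψ in (0:ℝ)..(Real.pi / 2),
      ∫ φ in ψ..(Real.pi - ψ), Real.sin (φ + ψ) ^ 2 * (1 / Real.sin φ) ^ 2) = 4 := by
  have hinner :
      (∫ ψ in (0:ℝ)..(π / 2), ∫ φ in ψ..(π - ψ), sin (φ + ψ) ^ 2 * (1 / sin φ) ^ 2) =
        ∫ ψ in (0:ℝ)..(π / 2), ((π - 2 * ψ) * cos (2 * ψ) + sin (2 * ψ)) := by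
    refine integral_congr_ae (Filter.Eventually.of_forall fun ψ hψ => ?_)
    rw [Set.uIoc_of_le (by positivity)] at hψ
    exact integral_sin_add_sq_div_sin_sq_symm hψ.1 (by linarith [hψ.2, pi_pos])
  rw [hinner, integral_pi_sub_two_mul_mul_cos_add_sin]
  norm_num
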